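/- Worst-case upper bound for DP-RL-LOW (Proposition H): There exists a constant C > 0 depending only on L such that for every consistent offline RLHF instance v, every ε, δ ∈ (0,1), and every n ≥ 1 with n·N_{k,i,j} ∈ ℕ, the expected simple regret of DP-RL-LOW satisfies E[R_n] ≤ C·( n^{−1/2}·Σ_{k, i≠i*_k} ρ_k(√(γ_{k,i}) + γ̃_{k,i}) + (√(log(1.25/δ))/(εn))·Σ_{k, i≠i*_k} ρ_k(√(γ^DP_{k,i}) + γ̃^DP_{k,i}) ), where γ̃_{k,i} = Σ_{N_{k',i',j'}>0} |w^{(k,i,i*_k)}_{k',i',j'}|/√(N_{k',i',j'}), γ^DP_{k,i} = Σ_{N_{k',i',j'}>0} (w^{(k,i,i*_k)}_{k',i',j'}/N_{k',i',j'})², and γ̃^DP_{k,i} = Σ_{N_{k',i',j'}>0} |w^{(k,i,i*_k)}_{k',i',j'}|/N_{k',i',j'}. -/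

import Mathlib

open MeasureTheory ProbabilityTheory Real

namespace RLHF

/-- The logistic sigmoid function. -/
noncomputable def sigmoid (x : ℝ) : ℝ := Real.exp x / (1 + Real.exp x)

/-- Clipping to the interval `[1/(1+e^{2L}), e^{2L}/(1+e^{2L})]`. -/
noncomputable def clip (L x : ℝ) : ℝ :=
  max (1 / (1 + Real.exp (2 * L))) (min (Real.exp (2 * L) / (1 + Real.exp (2 * L))) x)

/-- The logit (log-odds) function. -/
noncomputable def logit (x : ℝ) : ℝ := Real.log (x / (1 - x))

/-- An offline RLHF instance: state distribution, feature map, parameter vector and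
sampling proportions. -/
structure Inst (S A d : ℕ) where
  ρ : Fin S → ℝ
  φ : Fin S → Fin A → EuclideanSpace ℝ (Fin d)
  θ : EuclideanSpace ℝ (Fin d)
  N : Fin S → Fin A → Fin A → ℝ
  ρ_pos : ∀ k, 0 < ρ k
  ρ_sum : ∑ k, ρ k = 1
  N_nonneg : ∀ k i j, 0 ≤ N k i j
  N_sum : ∑ k, ∑ i, ∑ j, N k i j = 1
  φ_ne : ∀ k i j, i ≠ j → φ k i ≠ φ k j

namespace Inst

variable {S A d : ℕ}

/-- The reward of action `i` in state `k`. -/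
noncomputable def r (v : Inst S A d) (k : Fin S) (i : Fin A) : ℝ :=
  @inner ℝ _ _ (v.φ k i) v.θ

/-- The span of the sampled feature differences. -/
def W (v : Inst S A d) : Submodule ℝ (EuclideanSpace ℝ (Fin d)) :=
  Submodule.span ℝ {x | ∃ k i j, 0 < v.N k i j ∧ x = v.φ k i - v.φ k j}

/-- Consistency of an instance. -/
def Consistent (v : Inst S A d) : Prop :=
  ∀ k i j, v.φ k i - v.φ k j ∈ v.W

/-- `istar` assigns to each state its unique best action. -/
def BestAction (v : Inst S A d) (istar : Fin S → Fin A) : Prop :=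
  ∀ k j, j ≠ istar k → v.r k j < v.r k (istar k)

/-- The suboptimality gap. -/
noncomputable def gap (v : Inst S A d) (istar : Fin S → Fin A) (k : Fin S) (i : Fin A) : ℝ :=
  v.r k (istar k) - v.r k i

/-- The objective value of a candidate weight vector. -/
noncomputable def cost (v : Inst S A d) (u : Fin S → Fin A → Fin A → ℝ) : ℝ :=
  ∑ k', ∑ i', ∑ j', if 0 < v.N k' i' j' then (u k' i' j') ^ 2 / v.N k' i' j' else 0

/-- Feasibility of a weight vector for the pair `(i,j)` in state `k`: it vanishes where
`N` vanishes and expresses `φ(k,i) − φ(k,j)` as a linear combination of sampled feature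
differences. -/
def Feasible (v : Inst S A d) (k : Fin S) (i j : Fin A)
    (u : Fin S → Fin A → Fin A → ℝ) : Prop :=
  (∀ k' i' j', v.N k' i' j' = 0 → u k' i' j' = 0) ∧
  v.φ k i - v.φ k j = ∑ k', ∑ i', ∑ j', u k' i' j' • (v.φ k' i' - v.φ k' j')

/-- `w` is a locally optimal weight vector for `(k,i,j)`. -/
def IsLOW (v : Inst S A d) (k : Fin S) (i j : Fin A)
    (w : Fin S → Fin A → Fin A → ℝ) : Prop :=
  v.Feasible k i j w ∧ ∀ u, v.Feasible k i j u → v.cost w ≤ v.cost u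

/-- `γ̃_{k,i}`-type quantity: weighted sum of absolute weights over `1/√N`. -/
noncomputable def gammaTilde (v : Inst S A d) (u : Fin S → Fin A → Fin A → ℝ) : ℝ :=
  ∑ k', ∑ i', ∑ j',
    if 0 < v.N k' i' j' then |u k' i' j'| / Real.sqrt (v.N k' i' j') else 0

/-- `γ^DP`-type quantity. -/
noncomputable def gammaDP (v : Inst S A d) (u : Fin S → Fin A → Fin A → ℝ) : ℝ :=
  ∑ k', ∑ i', ∑ j',
    if 0 < v.N k' i' j' then (u k' i' j' / v.N k' i' j') ^ 2 else 0

/-- `γ̃^DP`-type quantity. -/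
noncomputable def gammaTildeDP (v : Inst S A d) (u : Fin S → Fin A → Fin A → ℝ) : ℝ :=
  ∑ k', ∑ i', ∑ j',
    if 0 < v.N k' i' j' then |u k' i' j'| / v.N k' i' j' else 0

/-- The hardness parameter `H(v)`, where `w k i j` denotes the locally optimal weights
for the triple `(k,i,j)`. -/
noncomputable def H (v : Inst S A d) (istar : Fin S → Fin A)
    (w : Fin S → Fin A → Fin A → Fin S → Fin A → Fin A → ℝ) : ℝ :=
  sSup {x | ∃ k i, i ≠ istar k ∧
    x = v.cost (w k i (istar k)) / (v.gap istar k i) ^ 2}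

/-- The DP hardness parameter `H_DP^{(ε,δ)}(v)`. -/
noncomputable def HDP (v : Inst S A d) (istar : Fin S → Fin A)
    (w : Fin S → Fin A → Fin A → Fin S → Fin A → Fin A → ℝ) (ε δ : ℝ) : ℝ :=
  sSup {x | ∃ k i, i ≠ istar k ∧
    x = Real.sqrt (Real.log (1.25 / δ) * v.gammaDP (w k i (istar k))) /
        (Real.sqrt ε * v.gap istar k i)}

/-- The empirical success proportion `B_{k,i,j}` computed from counts `y`. -/
noncomputable def B (v : Inst S A d) (n : ℕ) (y : Fin S → Fin A → Fin A → ℕ)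
    (k : Fin S) (i j : Fin A) : ℝ :=
  if 0 < v.N k i j then (y k i j : ℝ) / (n * v.N k i j) else 0

/-- The RL-LOW relative reward estimate `r̂_{k,i,j}` computed from counts `y`. -/
noncomputable def rhat (v : Inst S A d) (L : ℝ) (n : ℕ)
    (w : Fin S → Fin A → Fin A → Fin S → Fin A → Fin A → ℝ)
    (y : Fin S → Fin A → Fin A → ℕ) (k : Fin S) (i j : Fin A) : ℝ :=
  if i = j then 0 else
    ∑ k', ∑ i', ∑ j', w k i j k' i' j' * logit (clip L (v.B n y k' i' j'))

/-- The DP-RL-LOW private relative reward estimate `r̃_{k,i,j}` computed from counts `y`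
and Gaussian noise realizations `z`. -/
noncomputable def rtilde (v : Inst S A d) (L : ℝ) (n : ℕ)
    (w : Fin S → Fin A → Fin A → Fin S → Fin A → Fin A → ℝ)
    (y : Fin S → Fin A → Fin A → ℕ) (z : Fin S → Fin A → Fin A → ℝ)
    (k : Fin S) (i j : Fin A) : ℝ :=
  if i = j then 0 else
    ∑ k', ∑ i', ∑ j', w k i j k' i' j' *
      logit (clip L
        (if 0 < v.N k' i' j' then
          (y k' i' j' : ℝ) / (n * v.N k' i' j') + z k' i' j' else 0))

/-- Simple regret of the action assignment `ihat` (using the best actions `istar`). -/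
noncomputable def regret (v : Inst S A d) (istar : Fin S → Fin A)
    (ihat : Fin S → Fin A) : ℝ :=
  ∑ k, v.ρ k * (v.r k (istar k) - v.r k (ihat k))

/-- Simple regret of the action assignment `ihat` (via suprema of rewards; this does not
require the best action to be unique). -/
noncomputable def regretSup (v : Inst S A d) (ihat : Fin S → Fin A) : ℝ :=
  ∑ k, v.ρ k * ((⨆ j, v.r k j) - v.r k (ihat k))

end Inst

/-- `Y` has the binomial law with `m` trials and success probability `p` under `P`. -/
def HasBinomialLaw {Ω : Type*} [MeasurableSpace Ω] (P : Measure Ω)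
    (Y : Ω → ℕ) (m : ℕ) (p : ℝ) : Prop :=
  ∀ t : ℕ, P {ω | Y ω = t} =
    ENNReal.ofReal ((m.choose t : ℝ) * p ^ t * (1 - p) ^ (m - t))

/-- The data model of offline RLHF with pairwise comparisons: for each triple `(k,i,j)`
with `N_{k,i,j} > 0`, the count `Y k i j` is binomial with `n·N_{k,i,j}` trials and
success probability `σ(r_{k,i} − r_{k,j})`, and these counts are independent. -/
def IsBTLSample {S A d : ℕ} (v : Inst S A d) (n : ℕ) {Ω : Type*} [MeasurableSpace Ω]
    (P : Measure Ω) (Y : Fin S → Fin A → Fin A → Ω → ℕ) : Prop :=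
  (∀ k i j, Measurable (Y k i j)) ∧
  (∀ k i j, 0 < v.N k i j →
    HasBinomialLaw P (Y k i j) ⌈(n : ℝ) * v.N k i j⌉₊
      (sigmoid (v.r k i - v.r k j))) ∧
  iIndepFun
    (fun (t : {t : Fin S × Fin A × Fin A // 0 < v.N t.1 t.2.1 t.2.2}) =>
      fun ω => (Y t.1.1 t.1.2.1 t.1.2.2 ω : ℝ)) P

/-- The data model of DP-RL-LOW: on top of the BTL counts, for each triple with
`N_{k,i,j} > 0` there is Gaussian noise `ξ k i j` of mean `0` and variance
`2·log(1.25/δ)/(ε·n·N_{k,i,j})²`, and all counts and noises are jointly independent. -/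
def IsDPSample {S A d : ℕ} (v : Inst S A d) (n : ℕ) (ε δ : ℝ) {Ω : Type*}
    [MeasurableSpace Ω] (P : Measure Ω)
    (Y : Fin S → Fin A → Fin A → Ω → ℕ) (ξ : Fin S → Fin A → Fin A → Ω → ℝ) : Prop :=
  (∀ k i j, Measurable (Y k i j)) ∧
  (∀ k i j, Measurable (ξ k i j)) ∧
  (∀ k i j, 0 < v.N k i j →
    HasBinomialLaw P (Y k i j) ⌈(n : ℝ) * v.N k i j⌉₊
      (sigmoid (v.r k i - v.r k j))) ∧
  (∀ k i j, 0 < v.N k i j →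
    P.map (ξ k i j) =
      gaussianReal 0
        (Real.toNNReal (2 * Real.log (1.25 / δ) / (ε * n * v.N k i j) ^ 2))) ∧
  iIndepFun
    (fun (t : {t : Fin S × Fin A × Fin A // 0 < v.N t.1 t.2.1 t.2.2} ⊕
              {t : Fin S × Fin A × Fin A // 0 < v.N t.1 t.2.1 t.2.2}) =>
      Sum.elim
        (fun t => fun ω => (Y t.1.1 t.1.2.1 t.1.2.2 ω : ℝ))
        (fun t => ξ t.1.1 t.1.2.1 t.1.2.2) t) P

end RLHF

open RLHF

/-!
Fix a state `k` with `î_k ≠ i*_k` and write `u = w^{(k, î_k, i*_k)}`. Pairing the feasibility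
identity of `u` with `θ` gives `r_{k,î_k} - r_{k,i*_k} = Σ u · (r_{k',i'} - r_{k',j'})`, while the
algorithm guarantees `Σ u · logit(B̃^CLP) ≥ 0`; so the gap is at most
`Σ |u| · |logit(B̃^CLP) - (r_{k',i'} - r_{k',j'})|`.

Since `|r_{k',i'} - r_{k',j'}| ≤ 2L`, clipping fixes `σ(r_{k',i'} - r_{k',j'})`, and on the
clipping interval `logit` is `2(1 + e^{2L})`-Lipschitz. Each error is therefore at most
`2(1 + e^{2L})(|B - σ(·)| + |ξ|)`. Both terms are bounded in `L¹` by their `L²` norms: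
`1/(2√(nN))` for the binomial proportion and `√(2 log(1.25/δ))/(εnN)` for the Gaussian noise.
Summing over the triples gives the bound with the `γ̃` and `γ̃^DP` terms alone.
-/

open scoped NNReal unitInterval

theorem abs_le_sq_div_add {s : ℝ} (hs : 0 < s) (x : ℝ) : |x| ≤ x ^ 2 / (2 * s) + s / 2 := by
  rw [div_add_div _ _ (by positivity) two_ne_zero, le_div_iff₀ (by positivity)]
  nlinarith [two_mul_le_add_sq |x| s, sq_abs x]

theorem abs_log_sub_log_le {a x y : ℝ} (ha : 0 < a) (hx : a ≤ x) (hy : a ≤ y) :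
    |Real.log x - Real.log y| ≤ |x - y| / a := by
  wlog hxy : y ≤ x generalizing x y
  · rw [abs_sub_comm, abs_sub_comm x]
    exact this hy hx (le_of_not_ge hxy)
  have hy0 : 0 < y := ha.trans_le hy
  rw [abs_of_nonneg (sub_nonneg.2 (Real.log_le_log hy0 hxy)), abs_of_nonneg (sub_nonneg.2 hxy),
    ← Real.log_div (hy0.trans_le hxy).ne' hy0.ne']
  calc Real.log (x / y) ≤ x / y - 1 := Real.log_le_sub_one_of_pos (div_pos (hy0.trans_le hxy) hy0)
    _ = (x - y) / y := by field_simp [hy0.ne']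
    _ ≤ (x - y) / a := div_le_div_of_nonneg_left (by linarith) ha hy

theorem integral_abs_le_of_integral_sq_le {Ω : Type*} [MeasurableSpace Ω] {μ : Measure Ω}
    [IsProbabilityMeasure μ] {X : Ω → ℝ} {s : ℝ} (hs : 0 < s) (hX : AEStronglyMeasurable X μ)
    (hX2 : Integrable (fun ω => X ω ^ 2) μ) (h : ∫ ω, X ω ^ 2 ∂μ ≤ s ^ 2) :
    Integrable (fun ω => |X ω|) μ ∧ ∫ ω, |X ω| ∂μ ≤ s := by
  have hdom : Integrable (fun ω => X ω ^ 2 / (2 * s) + s / 2) μ :=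
    (hX2.div_const _).add (integrable_const _)
  have hint : Integrable (fun ω => |X ω|) μ :=
    hdom.mono' hX.norm (ae_of_all _ fun ω => by simpa using abs_le_sq_div_add hs (X ω))
  refine ⟨hint, ?_⟩
  calc ∫ ω, |X ω| ∂μ ≤ ∫ ω, X ω ^ 2 / (2 * s) + s / 2 ∂μ :=
        integral_mono hint hdom fun ω => abs_le_sq_div_add hs (X ω)
    _ = (∫ ω, X ω ^ 2 ∂μ) / (2 * s) + s / 2 := by
        rw [integral_add (hX2.div_const _) (integrable_const _), integral_div]; simp
    _ ≤ s ^ 2 / (2 * s) + s / 2 := by gcongr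
    _ = s := by field_simp; ring

theorem integral_abs_div_sub_le_binomial {m : ℕ} (hm : 0 < m) (p : I) :
    ∫ t, |(t : ℝ) / m - p| ∂Bin(m, p) ≤ 1 / (2 * Real.sqrt m) := by
  have hm' : (0 : ℝ) < m := by exact_mod_cast hm
  have hvar : ∫ t, ((t : ℝ) / m - p) ^ 2 ∂Bin(m, p) = p * (1 - p) / m := by
    have h := congrArg (Polynomial.eval (p : ℝ)) (bernsteinPolynomial.variance ℝ m)
    simp only [Polynomial.eval_finsetSum, bernsteinPolynomial,
      Polynomial.eval_mul, Polynomial.eval_pow, Polynomial.eval_sub,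
      Polynomial.eval_X, Polynomial.eval_natCast, Polynomial.eval_one, nsmul_eq_mul] at h
    rw [integral_binomial, ← Nat.range_succ_eq_Iic]
    field_simp
    rw [Finset.mul_sum, show (p : ℝ) * (1 - p) = m * p * (1 - p) / m by field_simp, ← h,
      Finset.sum_div]
    refine Finset.sum_congr rfl fun t _ => ?_
    rw [smul_eq_mul]
    field_simp
    ring
  refine (integral_abs_le_of_integral_sq_le (by positivity) (by fun_prop)
    (integrable_binomial _) ?_).2
  rw [hvar, div_pow, mul_pow, Real.sq_sqrt hm'.le, div_le_div_iff₀ hm' (by positivity)]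
  nlinarith [sq_nonneg ((p : ℝ) - 1 / 2)]

theorem integral_abs_gaussianReal_le {V : ℝ≥0} (hV : V ≠ 0) :
    ∫ x, |x| ∂gaussianReal 0 V ≤ Real.sqrt V := by
  have hsq : ∫ x, x ^ 2 ∂gaussianReal 0 V = V := by
    rw [← variance_of_integral_eq_zero aemeasurable_id' integral_id_gaussianReal]
    exact variance_fun_id_gaussianReal
  refine (integral_abs_le_of_integral_sq_le (by positivity) (by fun_prop)
    ((memLp_id_gaussianReal 2).integrable_sq) ?_).2
  exact (hsq.trans (Real.sq_sqrt V.2).symm).le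

theorem integral_abs_le_of_map_eq_gaussianReal {Ω : Type*} [MeasurableSpace Ω] {P : Measure Ω}
    {ξ : Ω → ℝ} (hξ : Measurable ξ) {V : ℝ≥0} (hV : V ≠ 0) (h : P.map ξ = gaussianReal 0 V) :
    Integrable (fun ω => |ξ ω|) P ∧ ∫ ω, |ξ ω| ∂P ≤ Real.sqrt V := by
  have hf : AEStronglyMeasurable (fun x : ℝ => |x|) (P.map ξ) := by fun_prop
  refine ⟨(integrable_map_measure hf hξ.aemeasurable).1 ?_, ?_⟩
  · rw [h]
    exact ((memLp_id_gaussianReal 1).integrable le_rfl).abs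
  · rw [← integral_map hξ.aemeasurable hf, h]
    exact integral_abs_gaussianReal_le hV

namespace RLHF

theorem logit_eq_log_sub_log {u : ℝ} (hu0 : 0 < u) (hu1 : u < 1) :
    logit u = Real.log u - Real.log (1 - u) :=
  Real.log_div hu0.ne' (by linarith)

theorem abs_logit_sub_logit_le {a u v : ℝ} (ha : 0 < a) (hu : u ∈ Set.Icc a (1 - a))
    (hv : v ∈ Set.Icc a (1 - a)) : |logit u - logit v| ≤ 2 / a * |u - v| := by
  obtain ⟨hu0, hu1⟩ := hu
  obtain ⟨hv0, hv1⟩ := hv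
  rw [logit_eq_log_sub_log (by linarith) (by linarith),
    logit_eq_log_sub_log (by linarith) (by linarith)]
  have h1 := abs_log_sub_log_le ha hu0 hv0
  have h2 := abs_log_sub_log_le (x := 1 - u) (y := 1 - v) ha (by linarith) (by linarith)
  rw [show 1 - u - (1 - v) = -(u - v) by ring, abs_neg] at h2
  calc _ = |(Real.log u - Real.log v) - (Real.log (1 - u) - Real.log (1 - v))| := by ring_nf
    _ ≤ |Real.log u - Real.log v| + |Real.log (1 - u) - Real.log (1 - v)| := abs_sub _ _
    _ ≤ 2 / a * |u - v| := by linarith [show 2 / a * |u - v| = |u - v| / a + |u - v| / a by ring]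

theorem sigmoid_pos (x : ℝ) : 0 < sigmoid x := by
  unfold sigmoid; positivity

theorem sigmoid_lt_one (x : ℝ) : sigmoid x < 1 := by
  rw [sigmoid, div_lt_one (by positivity)]
  linarith

theorem logit_sigmoid (x : ℝ) : logit (sigmoid x) = x := by
  have h : sigmoid x / (1 - sigmoid x) = Real.exp x := by
    unfold sigmoid
    field_simp
    ring
  rw [logit, h, Real.log_exp]

theorem one_sub_div_one_add_exp (x : ℝ) :
    Real.exp x / (1 + Real.exp x) = 1 - 1 / (1 + Real.exp x) := by
  field_simp
  ring

theorem sigmoid_mem_Icc {L x : ℝ} (hx : |x| ≤ 2 * L) :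
    sigmoid x ∈
      Set.Icc (1 / (1 + Real.exp (2 * L))) (Real.exp (2 * L) / (1 + Real.exp (2 * L))) := by
  obtain ⟨h1, h2⟩ := abs_le.1 hx
  have hx_le := Real.exp_le_exp.2 h2
  have hmul : 1 ≤ Real.exp x * Real.exp (2 * L) := by
    rw [← Real.exp_add]; exact Real.one_le_exp (by linarith)
  unfold sigmoid
  constructor
  · rw [div_le_div_iff₀ (by positivity) (by positivity)]
    nlinarith
  · rw [div_le_div_iff₀ (by positivity) (by positivity)]
    nlinarith

theorem clip_mem_Icc {L : ℝ} (hL : 0 ≤ L) (x : ℝ) :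
    clip L x ∈ Set.Icc (1 / (1 + Real.exp (2 * L))) (1 - 1 / (1 + Real.exp (2 * L))) := by
  rw [← one_sub_div_one_add_exp]
  have : 1 / (1 + Real.exp (2 * L)) ≤ Real.exp (2 * L) / (1 + Real.exp (2 * L)) := by
    gcongr; exact Real.one_le_exp (by linarith)
  exact ⟨le_max_left _ _, max_le this (min_le_left _ _)⟩

theorem clip_eq_self {L x : ℝ}
    (hx : x ∈ Set.Icc (1 / (1 + Real.exp (2 * L))) (Real.exp (2 * L) / (1 + Real.exp (2 * L)))) :
    clip L x = x := by
  rw [clip, min_eq_right hx.2, max_eq_right hx.1]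

theorem abs_clip_sub_clip_le (L x y : ℝ) : |clip L x - clip L y| ≤ |x - y| := by
  unfold clip
  rw [max_comm _ (min _ x), max_comm _ (min _ y)]
  refine (abs_max_sub_max_le_abs _ _ _).trans ?_
  set b := Real.exp (2 * L) / (1 + Real.exp (2 * L))
  simpa using abs_min_sub_min_le_max b x b y

theorem abs_logit_clip_sub_le {L Δ : ℝ} (hΔ : |Δ| ≤ 2 * L) (y : ℝ) :
    |logit (clip L y) - Δ| ≤ 2 * (1 + Real.exp (2 * L)) * |y - sigmoid Δ| := by
  have hL : 0 ≤ L := by linarith [abs_nonneg Δ]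
  have hfix : logit (clip L (sigmoid Δ)) = Δ := by
    rw [clip_eq_self (sigmoid_mem_Icc hΔ), logit_sigmoid]
  calc |logit (clip L y) - Δ| = |logit (clip L y) - logit (clip L (sigmoid Δ))| := by rw [hfix]
    _ ≤ 2 / (1 / (1 + Real.exp (2 * L))) * |clip L y - clip L (sigmoid Δ)| :=
        abs_logit_sub_logit_le (by positivity) (clip_mem_Icc hL y) (clip_mem_Icc hL _)
    _ ≤ 2 * (1 + Real.exp (2 * L)) * |y - sigmoid Δ| := by
        rw [div_div_eq_mul_div, div_one]
        exact mul_le_mul_of_nonneg_left (abs_clip_sub_clip_le L y _) (by positivity)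

theorem HasBinomialLaw.map_eq {Ω : Type*} [MeasurableSpace Ω] {P : Measure Ω} {Y : Ω → ℕ}
    (hY : Measurable Y) {m : ℕ} {p : I} (h : HasBinomialLaw P Y m p) : P.map Y = Bin(m, p) := by
  refine Measure.ext_of_singleton fun t => ?_
  rw [Measure.map_apply hY (measurableSet_singleton t), binomial_singleton]
  exact h t

section

variable {Ω : Type*} [MeasurableSpace Ω] {P : Measure Ω}

theorem HasBinomialLaw.integral_abs_div_sub_le {Y : Ω → ℕ} (hY : Measurable Y) {m : ℕ}
    (hm : 0 < m) {p : ℝ} (hp : p ∈ Set.Icc 0 1) (h : HasBinomialLaw P Y m p) :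
    Integrable (fun ω => |(Y ω : ℝ) / m - p|) P ∧
      ∫ ω, |(Y ω : ℝ) / m - p| ∂P ≤ 1 / (2 * Real.sqrt m) := by
  have hmap : P.map Y = Bin(m, ⟨p, hp⟩) := HasBinomialLaw.map_eq hY h
  have hf : AEStronglyMeasurable (fun t : ℕ => |(t : ℝ) / m - p|) (P.map Y) := .of_discrete
  refine ⟨(integrable_map_measure hf hY.aemeasurable).1 (hmap ▸ integrable_binomial _), ?_⟩
  rw [← integral_map hY.aemeasurable hf, hmap]
  exact integral_abs_div_sub_le_binomial hm _

theorem integral_abs_logit_clip_sub_le [IsProbabilityMeasure P] {L Δ : ℝ} (hΔ : |Δ| ≤ 2 * L)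
    {m : ℕ} (hm : 0 < m) {Y : Ω → ℕ} (hY : Measurable Y) (hYlaw : HasBinomialLaw P Y m (sigmoid Δ))
    {ξ : Ω → ℝ} (hξ : Measurable ξ) {V : ℝ≥0} (hV : V ≠ 0) (hξlaw : P.map ξ = gaussianReal 0 V) :
    Integrable (fun ω => |logit (clip L ((Y ω : ℝ) / m + ξ ω)) - Δ|) P ∧
      ∫ ω, |logit (clip L ((Y ω : ℝ) / m + ξ ω)) - Δ| ∂P ≤
        2 * (1 + Real.exp (2 * L)) * (1 / (2 * Real.sqrt m) + Real.sqrt V) := by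
  set c := 2 * (1 + Real.exp (2 * L))
  obtain ⟨hIY, hEY⟩ := hYlaw.integral_abs_div_sub_le hY hm
    ⟨(sigmoid_pos Δ).le, (sigmoid_lt_one Δ).le⟩
  obtain ⟨hIξ, hEξ⟩ := integral_abs_le_of_map_eq_gaussianReal hξ hV hξlaw
  have hdom : Integrable (fun ω => c * (|(Y ω : ℝ) / m - sigmoid Δ| + |ξ ω|)) P :=
    (hIY.add hIξ).const_mul c
  have hbound : ∀ ω, |logit (clip L ((Y ω : ℝ) / m + ξ ω)) - Δ| ≤
      c * (|(Y ω : ℝ) / m - sigmoid Δ| + |ξ ω|) := fun ω =>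
    (abs_logit_clip_sub_le hΔ _).trans (mul_le_mul_of_nonneg_left
      (by simpa only [add_sub_right_comm] using abs_add_le ((Y ω : ℝ) / m - sigmoid Δ) (ξ ω))
      (by positivity))
  have hmeas : AEStronglyMeasurable (fun ω => |logit (clip L ((Y ω : ℝ) / m + ξ ω)) - Δ|) P := by
    have hclip : Continuous (clip L) := continuous_const.max (continuous_const.min continuous_id)
    have hlogit : Measurable logit :=
      Real.measurable_log.comp (measurable_id.div (measurable_const.sub measurable_id))
    have hB : Measurable fun ω => (Y ω : ℝ) / m + ξ ω := by fun_prop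
    exact ((hlogit.comp (hclip.measurable.comp hB)).sub_const _).abs.aestronglyMeasurable
  have hint := hdom.mono' hmeas (ae_of_all _ fun ω => by simpa using hbound ω)
  refine ⟨hint, ?_⟩
  calc _ ≤ ∫ ω, c * (|(Y ω : ℝ) / m - sigmoid Δ| + |ξ ω|) ∂P := integral_mono hint hdom hbound
    _ = c * ((∫ ω, |(Y ω : ℝ) / m - sigmoid Δ| ∂P) + ∫ ω, |ξ ω| ∂P) := by
        rw [integral_const_mul, integral_add hIY hIξ]
    _ ≤ c * (1 / (2 * Real.sqrt m) + Real.sqrt V) := by gcongr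

end

end RLHF

namespace RLHF.Inst

variable {S A d : ℕ}

theorem Feasible.r_sub_eq {v : Inst S A d} {k : Fin S} {i j : Fin A} {u : Fin S → Fin A → Fin A → ℝ}
    (hu : v.Feasible k i j u) :
    v.r k i - v.r k j = ∑ k', ∑ i', ∑ j', u k' i' j' * (v.r k' i' - v.r k' j') := by
  have h := congrArg (fun x => inner ℝ x v.θ) hu.2
  simpa only [r, inner_sub_left, sum_inner, real_inner_smul_left] using h

theorem Feasible.r_sub_le {v : Inst S A d} {k : Fin S} {i j : Fin A} {u : Fin S → Fin A → Fin A → ℝ}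
    (hu : v.Feasible k i j u) {x : Fin S → Fin A → Fin A → ℝ}
    (hx : 0 ≤ ∑ k', ∑ i', ∑ j', u k' i' j' * x k' i' j') :
    v.r k j - v.r k i ≤
      ∑ k', ∑ i', ∑ j', |u k' i' j'| * |x k' i' j' - (v.r k' i' - v.r k' j')| := by
  calc v.r k j - v.r k i
      ≤ ∑ k', ∑ i', ∑ j', u k' i' j' * x k' i' j' - (v.r k i - v.r k j) := by linarith
    _ = ∑ k', ∑ i', ∑ j', u k' i' j' * (x k' i' j' - (v.r k' i' - v.r k' j')) := by
        simp only [hu.r_sub_eq, mul_sub, Finset.sum_sub_distrib]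
    _ ≤ _ := Finset.sum_le_sum fun k' _ => Finset.sum_le_sum fun i' _ =>
        Finset.sum_le_sum fun j' _ => by
          rw [← abs_mul]; exact le_abs_self _

variable (v : Inst S A d)

theorem regret_nonneg {istar : Fin S → Fin A} (hbest : v.BestAction istar) (ihat : Fin S → Fin A) :
    0 ≤ v.regret istar ihat := by
  refine Finset.sum_nonneg fun k _ => mul_nonneg (v.ρ_pos k).le (sub_nonneg.2 ?_)
  by_cases h : ihat k = istar k
  · rw [h]
  · exact (hbest k _ h).le

theorem regret_le_sum_abs_mul {istar : Fin S → Fin A}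
    {w : Fin S → Fin A → Fin A → Fin S → Fin A → Fin A → ℝ}
    (hw : ∀ k i, i ≠ istar k → v.Feasible k i (istar k) (w k i (istar k)))
    (x : Fin S → Fin A → Fin A → ℝ) (ihat : Fin S → Fin A)
    (hihat : ∀ k, ihat k ≠ istar k →
      0 ≤ ∑ k', ∑ i', ∑ j', w k (ihat k) (istar k) k' i' j' * x k' i' j') :
    v.regret istar ihat ≤ ∑ k, ∑ i with i ≠ istar k, v.ρ k *
      ∑ k', ∑ i', ∑ j', |w k i (istar k) k' i' j'| * |x k' i' j' - (v.r k' i' - v.r k' j')| := by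
  refine Finset.sum_le_sum fun k _ => ?_
  have hterm_nonneg : ∀ i ∈ Finset.univ.filter (· ≠ istar k), 0 ≤ v.ρ k *
      ∑ k', ∑ i', ∑ j', |w k i (istar k) k' i' j'| * |x k' i' j' - (v.r k' i' - v.r k' j')| :=
    fun _ _ => mul_nonneg (v.ρ_pos k).le (by positivity)
  by_cases h : ihat k = istar k
  · rw [h, sub_self, mul_zero]
    exact Finset.sum_nonneg hterm_nonneg
  · refine le_trans ?_ (Finset.single_le_sum hterm_nonneg ((Finset.mem_filter_univ _).2 h))
    exact mul_le_mul_of_nonneg_left ((hw k _ h).r_sub_le (hihat k h)) (v.ρ_pos k).le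

/-- The clipped private log-odds `log(B̃^CLP_{k,i,j} / (1 - B̃^CLP_{k,i,j}))`. -/
noncomputable def privLogit (L : ℝ) (n : ℕ) (y : Fin S → Fin A → Fin A → ℕ)
    (z : Fin S → Fin A → Fin A → ℝ) (k : Fin S) (i j : Fin A) : ℝ :=
  logit (clip L (if 0 < v.N k i j then (y k i j : ℝ) / (n * v.N k i j) + z k i j else 0))

theorem rtilde_of_ne {L : ℝ} {n : ℕ} {w : Fin S → Fin A → Fin A → Fin S → Fin A → Fin A → ℝ}
    {y : Fin S → Fin A → Fin A → ℕ} {z : Fin S → Fin A → Fin A → ℝ} {k : Fin S} {i j : Fin A}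
    (h : i ≠ j) :
    v.rtilde L n w y z k i j = ∑ k', ∑ i', ∑ j', w k i j k' i' j' * v.privLogit L n y z k' i' j' :=
  if_neg h

theorem gammaTilde_nonneg (u : Fin S → Fin A → Fin A → ℝ) : 0 ≤ v.gammaTilde u :=
  Finset.sum_nonneg fun _ _ => Finset.sum_nonneg fun _ _ => Finset.sum_nonneg fun _ _ => by
    split_ifs <;> positivity

theorem gammaTildeDP_nonneg (u : Fin S → Fin A → Fin A → ℝ) : 0 ≤ v.gammaTildeDP u :=
  Finset.sum_nonneg fun _ _ => Finset.sum_nonneg fun _ _ => Finset.sum_nonneg fun _ _ => by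
    split_ifs with h
    · exact div_nonneg (abs_nonneg _) h.le
    · exact le_rfl

theorem sum_abs_mul_le_gammaTilde_add {u : Fin S → Fin A → Fin A → ℝ}
    (hu : ∀ k i j, v.N k i j = 0 → u k i j = 0) {e : Fin S → Fin A → Fin A → ℝ} {α β : ℝ}
    (he : ∀ k i j, 0 < v.N k i j → e k i j ≤ α / Real.sqrt (v.N k i j) + β / v.N k i j) :
    ∑ k, ∑ i, ∑ j, |u k i j| * e k i j ≤ α * v.gammaTilde u + β * v.gammaTildeDP u := by
  simp only [gammaTilde, gammaTildeDP, Finset.mul_sum, ← Finset.sum_add_distrib]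
  refine Finset.sum_le_sum fun k _ => Finset.sum_le_sum fun i _ => Finset.sum_le_sum fun j _ => ?_
  split_ifs with hN
  · calc |u k i j| * e k i j ≤ |u k i j| * (α / Real.sqrt (v.N k i j) + β / v.N k i j) :=
          mul_le_mul_of_nonneg_left (he k i j hN) (abs_nonneg _)
      _ = _ := by ring
  · simp [hu k i j (le_antisymm (not_lt.1 hN) (v.N_nonneg k i j))]

theorem sum_rho_mul_sum_abs_mul_le {istar : Fin S → Fin A}
    {w : Fin S → Fin A → Fin A → Fin S → Fin A → Fin A → ℝ}
    (hw : ∀ k i, i ≠ istar k → ∀ k' i' j', v.N k' i' j' = 0 → w k i (istar k) k' i' j' = 0)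
    {e : Fin S → Fin A → Fin A → ℝ} {C a b : ℝ} (hC : 0 ≤ C) (ha : 0 ≤ a) (hb : 0 ≤ b)
    (he : ∀ k i j, 0 < v.N k i j → e k i j ≤ C * (a / Real.sqrt (v.N k i j) + b / v.N k i j)) :
    ∑ k, ∑ i with i ≠ istar k, v.ρ k * ∑ k', ∑ i', ∑ j', |w k i (istar k) k' i' j'| * e k' i' j' ≤
      C * (a * (∑ k, ∑ i, if i ≠ istar k then
          v.ρ k * (Real.sqrt (v.cost (w k i (istar k))) + v.gammaTilde (w k i (istar k))) else 0) +
        b * (∑ k, ∑ i, if i ≠ istar k then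
          v.ρ k * (Real.sqrt (v.gammaDP (w k i (istar k))) + v.gammaTildeDP (w k i (istar k)))
          else 0)) := by
  calc _ ≤ ∑ k, ∑ i with i ≠ istar k,
        (C * a * (v.ρ k * (Real.sqrt (v.cost (w k i (istar k))) + v.gammaTilde (w k i (istar k)))) +
          C * b * (v.ρ k * (Real.sqrt (v.gammaDP (w k i (istar k))) +
            v.gammaTildeDP (w k i (istar k))))) := by
        refine Finset.sum_le_sum fun k _ => Finset.sum_le_sum fun i hi => ?_
        have hρ := (v.ρ_pos k).le
        have hsum := v.sum_abs_mul_le_gammaTilde_add (hw k i (Finset.mem_filter.1 hi).2)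
          (α := C * a) (β := C * b) fun k' i' j' hN => (he k' i' j' hN).trans_eq (by ring)
        have hsqrt_cost := Real.sqrt_nonneg (v.cost (w k i (istar k)))
        have hsqrt_gammaDP := Real.sqrt_nonneg (v.gammaDP (w k i (istar k)))
        nlinarith [mul_le_mul_of_nonneg_left hsum hρ, mul_nonneg (mul_nonneg hC ha) hρ,
          mul_nonneg (mul_nonneg hC hb) hρ]
    _ = _ := by
        simp only [← Finset.sum_filter, Finset.mul_sum, ← Finset.sum_add_distrib, mul_add, mul_assoc]

end RLHF.Inst

-- The binomial and Gaussian scales `1/(2√m)` and `√V` at `m = nN`, `V = 2c/(εnN)²`.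
theorem one_div_two_sqrt_mul_add_sqrt_le {n N ε c : ℝ} (hn : 0 < n) (hN : 0 < N) (hε : 0 < ε) :
    1 / (2 * Real.sqrt (n * N)) + Real.sqrt (2 * c / (ε * n * N) ^ 2) ≤
      2 * (1 / Real.sqrt n / Real.sqrt N + Real.sqrt c / (ε * n) / N) := by
  have h2 : Real.sqrt 2 ≤ 2 := Real.sqrt_le_iff.2 ⟨zero_le_two, by norm_num⟩
  have hsn := Real.sqrt_pos.2 hn
  have hsN := Real.sqrt_pos.2 hN
  rw [Real.sqrt_mul hn.le, Real.sqrt_div' _ (by positivity), Real.sqrt_sq (by positivity),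
    Real.sqrt_mul zero_le_two]
  calc 1 / (2 * (Real.sqrt n * Real.sqrt N)) + Real.sqrt 2 * Real.sqrt c / (ε * n * N)
      = (1 / Real.sqrt n / Real.sqrt N) / 2 + Real.sqrt 2 * (Real.sqrt c / (ε * n) / N) := by
        field_simp
    _ ≤ 2 * (1 / Real.sqrt n / Real.sqrt N) + 2 * (Real.sqrt c / (ε * n) / N) := by
        gcongr
        linarith [show 0 ≤ 1 / Real.sqrt n / Real.sqrt N by positivity]
    _ = _ := by ring

namespace RLHF.IsDPSample

variable {S A d : ℕ} {v : Inst S A d} {n : ℕ} {ε δ : ℝ} {Ω : Type*} [MeasurableSpace Ω]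
  {P : Measure Ω} [IsProbabilityMeasure P] {Y : Fin S → Fin A → Fin A → Ω → ℕ}
  {ξ : Fin S → Fin A → Fin A → Ω → ℝ}

theorem integral_abs_privLogit_sub_le (hDP : IsDPSample v n ε δ P Y ξ) {L : ℝ}
    (hr : ∀ k i, |v.r k i| ≤ L) (hε : 0 < ε) (hδ : δ ∈ Set.Ioo 0 1) (hn : 0 < n)
    {k : Fin S} {i j : Fin A} (hN : 0 < v.N k i j) (hnN : ∃ m : ℕ, (m : ℝ) = n * v.N k i j) :
    Integrable (fun ω => |v.privLogit L n (fun k' i' j' => Y k' i' j' ω)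
        (fun k' i' j' => ξ k' i' j' ω) k i j - (v.r k i - v.r k j)|) P ∧
      ∫ ω, |v.privLogit L n (fun k' i' j' => Y k' i' j' ω)
        (fun k' i' j' => ξ k' i' j' ω) k i j - (v.r k i - v.r k j)| ∂P ≤
      4 * (1 + Real.exp (2 * L)) * (1 / Real.sqrt n / Real.sqrt (v.N k i j) +
        Real.sqrt (Real.log (1.25 / δ)) / (ε * n) / v.N k i j) := by
  obtain ⟨hYm, hξm, hbin, hgauss, -⟩ := hDP
  obtain ⟨m, hm⟩ := hnN
  have hn' : (0 : ℝ) < n := by exact_mod_cast hn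
  have hm0 : 0 < m := by exact_mod_cast (hm ▸ mul_pos hn' hN : (0 : ℝ) < m)
  have hΔ : |v.r k i - v.r k j| ≤ 2 * L := by
    linarith [abs_sub (v.r k i) (v.r k j), hr k i, hr k j]
  have hlog : 0 < Real.log (1.25 / δ) :=
    Real.log_pos (by rw [lt_div_iff₀ hδ.1]; linarith [hδ.2])
  set V := 2 * Real.log (1.25 / δ) / (ε * n * v.N k i j) ^ 2
  have hV : 0 < V := by positivity
  have hYlaw := hbin k i j hN
  rw [← hm, Nat.ceil_natCast] at hYlaw
  have key := integral_abs_logit_clip_sub_le hΔ hm0 (hYm k i j) hYlaw (hξm k i j)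
    (Real.toNNReal_pos.2 hV).ne' (hgauss k i j hN)
  simp only [Inst.privLogit, if_pos hN, ← hm]
  refine ⟨key.1, key.2.trans ?_⟩
  rw [Real.coe_toNNReal _ hV.le, hm]
  calc _ ≤ 2 * (1 + Real.exp (2 * L)) * (2 * (1 / Real.sqrt n / Real.sqrt (v.N k i j) +
        Real.sqrt (Real.log (1.25 / δ)) / (ε * n) / v.N k i j)) := by
        gcongr
        exact one_div_two_sqrt_mul_add_sqrt_le hn' hN hε
    _ = _ := by ring

theorem integrable_abs_privLogit_sub (hDP : IsDPSample v n ε δ P Y ξ) {L : ℝ}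
    (hr : ∀ k i, |v.r k i| ≤ L) (hε : 0 < ε) (hδ : δ ∈ Set.Ioo 0 1) (hn : 0 < n)
    (hnN : ∀ k i j, ∃ m : ℕ, (m : ℝ) = n * v.N k i j) (k : Fin S) (i j : Fin A) :
    Integrable (fun ω => |v.privLogit L n (fun k' i' j' => Y k' i' j' ω)
        (fun k' i' j' => ξ k' i' j' ω) k i j - (v.r k i - v.r k j)|) P := by
  by_cases hN : 0 < v.N k i j
  · exact (hDP.integral_abs_privLogit_sub_le hr hε hδ hn hN (hnN k i j)).1
  · simp only [Inst.privLogit, if_neg hN]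
    exact integrable_const _

end RLHF.IsDPSample

theorem dp_rl_low_worst_case_upper_bound_general (L : ℝ) :
    ∃ C : ℝ, 0 < C ∧
      ∀ (S A d : ℕ), 2 ≤ A →
      ∀ v : Inst S A d, (∀ k i, |v.r k i| ≤ L) → v.Consistent →
      ∀ istar : Fin S → Fin A, v.BestAction istar →
      ∀ w : Fin S → Fin A → Fin A → Fin S → Fin A → Fin A → ℝ,
        (∀ k i j, i ≠ j → v.IsLOW k i j (w k i j)) →
      ∀ ε δ : ℝ, ε ∈ Set.Ioo (0 : ℝ) 1 → δ ∈ Set.Ioo (0 : ℝ) 1 →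
      ∀ n : ℕ, 1 ≤ n →
        (∀ k i j, ∃ m : ℕ, (m : ℝ) = n * v.N k i j) →
        ∀ (Ω : Type) [MeasurableSpace Ω] (P : MeasureTheory.Measure Ω),
          MeasureTheory.IsProbabilityMeasure P →
        ∀ (Y : Fin S → Fin A → Fin A → Ω → ℕ) (ξ : Fin S → Fin A → Fin A → Ω → ℝ),
          IsDPSample v n ε δ P Y ξ →
        ∀ ihat : Ω → Fin S → Fin A,
          (∀ k a, MeasurableSet {ω | ihat ω k = a}) →
          (∀ ω k j, j ≠ ihat ω k →
            0 ≤ v.rtilde L n w (fun k' i' j' => Y k' i' j' ω)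
              (fun k' i' j' => ξ k' i' j' ω) k (ihat ω k) j) →
          ∫ ω, v.regret istar (ihat ω) ∂P ≤
            C * ((1 / Real.sqrt n) *
                (∑ k, ∑ i, if i ≠ istar k then
                  v.ρ k * (Real.sqrt (v.cost (w k i (istar k))) +
                    v.gammaTilde (w k i (istar k))) else 0) +
              (Real.sqrt (Real.log (1.25 / δ)) / (ε * n)) *
                (∑ k, ∑ i, if i ≠ istar k then
                  v.ρ k * (Real.sqrt (v.gammaDP (w k i (istar k))) +
                    v.gammaTildeDP (w k i (istar k))) else 0)) := by
  refine ⟨4 * (1 + Real.exp (2 * L)), by positivity, ?_⟩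
  rintro S A d - v hr - istar hbest w hw ε δ ⟨hε, -⟩ hδ n hn hnN Ω _ P _ Y ξ hDP ihat - hpos
  set E := fun k' i' j' ω => |v.privLogit L n (fun k' i' j' => Y k' i' j' ω)
    (fun k' i' j' => ξ k' i' j' ω) k' i' j' - (v.r k' i' - v.r k' j')|
  have hE := hDP.integrable_abs_privLogit_sub hr hε hδ hn hnN
  calc ∫ ω, v.regret istar (ihat ω) ∂P
      ≤ ∫ ω, ∑ k, ∑ i with i ≠ istar k, v.ρ k *
          ∑ k', ∑ i', ∑ j', |w k i (istar k) k' i' j'| * E k' i' j' ω ∂P :=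
        integral_mono_of_nonneg (ae_of_all _ fun ω => v.regret_nonneg hbest _) (by fun_prop)
          (ae_of_all _ fun ω => v.regret_le_sum_abs_mul (fun k i hi => (hw k i _ hi).1) _ _
            fun k hk => v.rtilde_of_ne hk ▸ hpos ω k _ (Ne.symm hk))
    _ = ∑ k, ∑ i with i ≠ istar k, v.ρ k *
          ∑ k', ∑ i', ∑ j', |w k i (istar k) k' i' j'| * ∫ ω, E k' i' j' ω ∂P := by
        simp (disch := fun_prop) only [integral_const_mul, integral_finsetSum]
    _ ≤ _ := v.sum_rho_mul_sum_abs_mul_le (fun k i hi => (hw k i _ hi).1.1)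
        (by positivity) (by positivity) (by positivity)
        fun k' i' j' hN => (hDP.integral_abs_privLogit_sub_le hr hε hδ hn hN (hnN k' i' j')).2

/-- **Proposition H (Worst-case upper bound for DP-RL-LOW).**
There is a constant `C > 0` depending only on `L` such that for every consistent
instance `v`, privacy parameters `ε, δ ∈ (0,1)`, and every `n ≥ 1` with
`n·N_{k,i,j} ∈ ℕ`, the expected simple regret of DP-RL-LOW satisfies
`E[R_n] ≤ C·(n^{−1/2}·Σ ρ_k(√γ_{k,i} + γ̃_{k,i})
  + (√(log(1.25/δ))/(εn))·Σ ρ_k(√γ^DP_{k,i} + γ̃^DP_{k,i}))`. -/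
theorem dp_rl_low_worst_case_upper_bound (L : ℝ) (hL : 0 < L) :
    ∃ C : ℝ, 0 < C ∧
      ∀ (S A d : ℕ), 2 ≤ A →
      ∀ v : Inst S A d, (∀ k i, |v.r k i| ≤ L) → v.Consistent →
      ∀ istar : Fin S → Fin A, v.BestAction istar →
      ∀ w : Fin S → Fin A → Fin A → Fin S → Fin A → Fin A → ℝ,
        (∀ k i j, i ≠ j → v.IsLOW k i j (w k i j)) →
      ∀ ε δ : ℝ, ε ∈ Set.Ioo (0 : ℝ) 1 → δ ∈ Set.Ioo (0 : ℝ) 1 →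
      ∀ n : ℕ, 1 ≤ n →
        (∀ k i j, ∃ m : ℕ, (m : ℝ) = n * v.N k i j) →
        ∀ (Ω : Type) [MeasurableSpace Ω] (P : MeasureTheory.Measure Ω),
          MeasureTheory.IsProbabilityMeasure P →
        ∀ (Y : Fin S → Fin A → Fin A → Ω → ℕ) (ξ : Fin S → Fin A → Fin A → Ω → ℝ),
          IsDPSample v n ε δ P Y ξ →
        ∀ ihat : Ω → Fin S → Fin A,
          (∀ k a, MeasurableSet {ω | ihat ω k = a}) →
          (∀ ω k j, j ≠ ihat ω k →
            0 ≤ v.rtilde L n w (fun k' i' j' => Y k' i' j' ω)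
              (fun k' i' j' => ξ k' i' j' ω) k (ihat ω k) j) →
          ∫ ω, v.regret istar (ihat ω) ∂P ≤
            C * ((1 / Real.sqrt n) *
                (∑ k, ∑ i, if i ≠ istar k then
                  v.ρ k * (Real.sqrt (v.cost (w k i (istar k))) +
                    v.gammaTilde (w k i (istar k))) else 0) +
              (Real.sqrt (Real.log (1.25 / δ)) / (ε * n)) *
                (∑ k, ∑ i, if i ≠ istar k then
                  v.ρ k * (Real.sqrt (v.gammaDP (w k i (istar k))) +
                    v.gammaTildeDP (w k i (istar k))) else 0)) :=
  dp_rl_low_worst_case_upper_bound_general L
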